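/- arXiv:1306.6941 — 4 statements merged into one kernel-verified Lean document; each statement's English description precedes it below -/
import Mathlib

section
/- Let V be a complex Hilbert space and let S, T : V → V be continuous linear operators such that both S∘T and T∘S are of finite rank. Then the commutator S∘T − T∘S lies in [F(V), F(V)], the additive subgroup generated by commutators of finite-rank operators. -/
/-- A continuous linear map is of finite rank if its range is finite dimensional. -/
def FiniteRank {V W : Type*} [NormedAddCommGroup V] [NormedSpace ℂ V]
    [NormedAddCommGroup W] [NormedSpace ℂ W] (T : V →L[ℂ] W) : Prop :=
  FiniteDimensional ℂ (LinearMap.range (T : V →ₗ[ℂ] W))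

/-- `[F(V), F(V)]`: the additive subgroup of the continuous endomorphisms of `V`
generated by commutators of finite-rank operators. -/
noncomputable def frCommutators (V : Type*) [NormedAddCommGroup V] [NormedSpace ℂ V] :
    AddSubgroup (V →L[ℂ] V) :=
  AddSubgroup.closure
    {C | ∃ A B : V →L[ℂ] V, FiniteRank A ∧ FiniteRank B ∧ C = A.comp B - B.comp A}

/-!
The finite-rank operators form a two-sided ideal `I` of von Neumann regular elements: every
`a ∈ I` admits `y` with `a * y * a = a`, by Hahn–Banach applied to the finite-dimensional range.
Regularity yields a two-sided local unit `p ∈ I` for `a = s * t`, and then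
`s * t - t * s = ⁅p * s, t * p⁆ - n` with `n = t * s - t * p² * s ∈ I`. Since `s * t * p = s * t`
we get `s * n = 0`, so `n * n = 0`, and a square-zero regular `n` with `n * z * n = n` is the
single commutator `⁅n * z, n⁆`.
-/

namespace TwoSidedIdeal

variable {R : Type*} [Ring R] (I : TwoSidedIdeal R)

def commutatorSubgroup : AddSubgroup R :=
  AddSubgroup.closure {c | ∃ a ∈ I, ∃ b ∈ I, ⁅a, b⁆ = c}

variable {I}

lemma exists_mul_eq_self_and_mul_eq_self {a y : R} (ha : a ∈ I)
    (h : a * y * a = a) : ∃ p ∈ I, p * a = a ∧ a * p = a := by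
  refine ⟨y * a + a * y - y * a * (a * y), ?_, ?_, ?_⟩
  · exact I.sub_mem (I.add_mem (I.mul_mem_left _ _ ha) (I.mul_mem_right _ _ ha))
      (I.mul_mem_left _ _ (I.mul_mem_right _ _ ha))
  · calc _ = y * a * a + a * y * a - y * a * (a * y * a) := by noncomm_ring
      _ = a := by rw [h]; abel
  · calc _ = a * y * a + a * a * y - a * y * a * a * y := by noncomm_ring
      _ = a := by rw [h]; abel

lemma mem_commutatorSubgroup_of_mul_self_eq_zero {n z : R} (hn : n ∈ I)
    (h : n * z * n = n) (hsq : n * n = 0) : n ∈ I.commutatorSubgroup :=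
  AddSubgroup.subset_closure ⟨n * z, I.mul_mem_right _ _ hn, n, hn, by
    rw [Ring.lie_def, h, ← mul_assoc, hsq, zero_mul, sub_zero]⟩

theorem mul_sub_mul_mem_commutatorSubgroup
    (hreg : ∀ a ∈ I, ∃ y, a * y * a = a) {s t : R} (hst : s * t ∈ I) (hts : t * s ∈ I) :
    s * t - t * s ∈ I.commutatorSubgroup := by
  obtain ⟨y, hy⟩ := hreg _ hst
  obtain ⟨p, hpI, hpl, hpr⟩ := I.exists_mul_eq_self_and_mul_eq_self hst hy
  set n := t * s - t * (p * p) * s with hn_def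
  have hnI : n ∈ I :=
    I.sub_mem hts (I.mul_mem_right _ _ (I.mul_mem_left _ _ (I.mul_mem_left _ _ hpI)))
  have hsn : s * n = 0 := by
    calc s * n = s * t * s - s * t * p * p * s := by simp only [hn_def]; noncomm_ring
      _ = 0 := by rw [hpr, hpr, sub_self]
  have hnn : n * n = 0 := by
    calc n * n = t * (s * n) - t * (p * p) * (s * n) := by
          change (t * s - t * (p * p) * s) * n = _
          rw [sub_mul, mul_assoc, mul_assoc]
      _ = 0 := by rw [hsn]; simp
  obtain ⟨z, hz⟩ := hreg n hnI
  have hcomm : ⁅p * s, t * p⁆ = s * t - t * (p * p) * s := by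
    calc ⁅p * s, t * p⁆ = p * (s * t) * p - t * (p * p) * s := by rw [Ring.lie_def]; noncomm_ring
      _ = s * t - t * (p * p) * s := by rw [hpl, hpr]
  have hps : ⁅p * s, t * p⁆ ∈ I.commutatorSubgroup :=
    AddSubgroup.subset_closure ⟨_, I.mul_mem_right _ _ hpI, _, I.mul_mem_left _ _ hpI, rfl⟩
  have key : s * t - t * s = ⁅p * s, t * p⁆ - n := by rw [hcomm, hn_def]; abel
  rw [key]
  exact I.commutatorSubgroup.sub_mem hps
    (I.mem_commutatorSubgroup_of_mul_self_eq_zero hnI hz hnn)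

end TwoSidedIdeal

theorem ContinuousLinearMap.exists_comp_comp_eq_self {𝕜 E F : Type*} [RCLike 𝕜]
    [NormedAddCommGroup E] [NormedSpace 𝕜 E] [NormedAddCommGroup F] [NormedSpace 𝕜 F]
    (A : E →L[𝕜] F) [FiniteDimensional 𝕜 (LinearMap.range (A : E →ₗ[𝕜] F))] :
    ∃ B : F →L[𝕜] E, A ∘L B ∘L A = A := by
  set r := LinearMap.range (A : E →ₗ[𝕜] F)
  obtain ⟨π, hπ⟩ := Submodule.ClosedComplemented.of_finiteDimensional r
  obtain ⟨σ, hσ⟩ := (A : E →ₗ[𝕜] F).rangeRestrict.exists_rightInverse_of_surjective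
    (LinearMap.range_rangeRestrict _)
  refine ⟨LinearMap.toContinuousLinearMap σ ∘L π, ?_⟩
  ext x
  have hπAx : π (A x) = ⟨A x, LinearMap.mem_range_self _ x⟩ :=
    hπ ⟨A x, LinearMap.mem_range_self _ x⟩
  simpa [hπAx] using congrArg Subtype.val (LinearMap.congr_fun hσ (π (A x)))

lemma finiteRank_iff_hasFiniteRange {V W : Type*} [NormedAddCommGroup V] [NormedSpace ℂ V]
    [NormedAddCommGroup W] [NormedSpace ℂ W] {T : V →L[ℂ] W} :
    FiniteRank T ↔ (T : V →ₗ[ℂ] W).HasFiniteRange :=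
  Module.Finite.iff_fg

section FiniteRankIdeal

variable (V : Type*) [NormedAddCommGroup V] [NormedSpace ℂ V]

def finiteRankIdeal : TwoSidedIdeal (V →L[ℂ] V) :=
  .mk' {T | FiniteRank T}
    (finiteRank_iff_hasFiniteRange.2 (by simp))
    (fun hA hB ↦ finiteRank_iff_hasFiniteRange.2
      ((finiteRank_iff_hasFiniteRange.1 hA).add (finiteRank_iff_hasFiniteRange.1 hB)))
    (fun hA ↦ finiteRank_iff_hasFiniteRange.2 (finiteRank_iff_hasFiniteRange.1 hA).neg)
    (fun hB ↦ finiteRank_iff_hasFiniteRange.2 ((finiteRank_iff_hasFiniteRange.1 hB).comp_left _))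
    (fun hA ↦ finiteRank_iff_hasFiniteRange.2 ((finiteRank_iff_hasFiniteRange.1 hA).comp_right _))

variable {V}

@[simp]
lemma mem_finiteRankIdeal {T : V →L[ℂ] V} : T ∈ finiteRankIdeal V ↔ FiniteRank T :=
  TwoSidedIdeal.mem_mk' ..

lemma finiteRankIdeal_commutatorSubgroup_le :
    (finiteRankIdeal V).commutatorSubgroup ≤ frCommutators V := by
  refine AddSubgroup.closure_mono ?_
  rintro _ ⟨A, hA, B, hB, rfl⟩
  exact ⟨A, B, mem_finiteRankIdeal.1 hA, mem_finiteRankIdeal.1 hB, Ring.lie_def A B⟩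

end FiniteRankIdeal

theorem stmt0_general {V : Type*} [NormedAddCommGroup V] [InnerProductSpace ℂ V]
    (S T : V →L[ℂ] V) (hST : FiniteRank (S.comp T)) (hTS : FiniteRank (T.comp S)) :
    S.comp T - T.comp S ∈ frCommutators V := by
  refine finiteRankIdeal_commutatorSubgroup_le
    ((finiteRankIdeal V).mul_sub_mul_mem_commutatorSubgroup (fun A hA ↦ ?_)
      (mem_finiteRankIdeal.2 hST) (mem_finiteRankIdeal.2 hTS))
  have : FiniteDimensional ℂ (LinearMap.range (A : V →ₗ[ℂ] V)) := mem_finiteRankIdeal.1 hA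
  exact A.exists_comp_comp_eq_self

theorem stmt0 {V : Type*} [NormedAddCommGroup V] [InnerProductSpace ℂ V] [CompleteSpace V]
    (S T : V →L[ℂ] V) (hST : FiniteRank (S.comp T)) (hTS : FiniteRank (T.comp S)) :
    S.comp T - T.comp S ∈ frCommutators V :=
  stmt0_general S T hST hTS
end

section
/- Let H, H' be complex Hilbert spaces and let Z : H → H' be a continuous linear map admitting parametrices Q and P. Define continuous operators on H × H' by L_Q(u,v) = (u − Q(Z u), Z(Q v) − v) and L_P(u,v) = (u − P(Z u), Z(P v) − v). Then L_Q and L_P are of finite rank, and L_Q − L_P lies in [F(H × H'), F(H × H')]. -/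
/-- `Q` is a parametrix for `Z`: `Q∘Z - id` and `Z∘Q - id` are finite rank. -/
def IsParametrix {H H' : Type*} [NormedAddCommGroup H] [NormedSpace ℂ H]
    [NormedAddCommGroup H'] [NormedSpace ℂ H']
    (Z : H →L[ℂ] H') (Q : H' →L[ℂ] H) : Prop :=
  FiniteRank (Q.comp Z - ContinuousLinearMap.id ℂ H) ∧
    FiniteRank (Z.comp Q - ContinuousLinearMap.id ℂ H')

/-- The logarithm `L_Q (u, v) = (u − Q(Z u), Z(Q v) − v)` on `H × H'`. -/
noncomputable def Lop {H H' : Type*} [NormedAddCommGroup H] [NormedSpace ℂ H]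
    [NormedAddCommGroup H'] [NormedSpace ℂ H']
    (Z : H →L[ℂ] H') (Q : H' →L[ℂ] H) : (H × H') →L[ℂ] (H × H') :=
  ((ContinuousLinearMap.id ℂ H - Q.comp Z).comp (ContinuousLinearMap.fst ℂ H H')).prod
    ((Z.comp Q - ContinuousLinearMap.id ℂ H').comp (ContinuousLinearMap.snd ℂ H H'))

/-!
`L_Q - L_P = B A - A B` with `A (u, v) = ((Q - P) v, 0)` and `B (u, v) = (0, Z u)`, and
`Q - P = (Q Z - 1) P - Q (Z P - 1)` is of finite rank. A commutator `G F - F G` with `F` of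
finite rank lies in `[F, F]`: if `E` is a continuous projection onto the (finite-dimensional)
range of `F`, which exists by Hahn–Banach, then `G F - F G = [G E, F] + [F G - F G E, E]`.
-/

section

open ContinuousLinearMap

variable {U V W : Type*} [NormedAddCommGroup U] [NormedSpace ℂ U]
  [NormedAddCommGroup V] [NormedSpace ℂ V] [NormedAddCommGroup W] [NormedSpace ℂ W]

namespace FiniteRank

lemma of_range_le {T : V →L[ℂ] W} {p : Submodule ℂ W} [FiniteDimensional ℂ p]
    (h : LinearMap.range (T : V →ₗ[ℂ] W) ≤ p) : FiniteRank T :=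
  Submodule.finiteDimensional_of_le h

lemma clm_comp {T : V →L[ℂ] W} (hT : FiniteRank T) (S : W →L[ℂ] U) :
    FiniteRank (S.comp T) := by
  have : FiniteDimensional ℂ (LinearMap.range (T : V →ₗ[ℂ] W)) := hT
  unfold FiniteRank
  rw [toLinearMap_comp, LinearMap.range_comp]
  infer_instance

lemma comp_clm {T : V →L[ℂ] W} (hT : FiniteRank T) (S : U →L[ℂ] V) :
    FiniteRank (T.comp S) :=
  have : FiniteDimensional ℂ (LinearMap.range (T : V →ₗ[ℂ] W)) := hT
  of_range_le (LinearMap.range_comp_le_range (S : U →ₗ[ℂ] V) (T : V →ₗ[ℂ] W))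

lemma add {T S : V →L[ℂ] W} (hT : FiniteRank T) (hS : FiniteRank S) :
    FiniteRank (T + S) :=
  have : FiniteDimensional ℂ (LinearMap.range (T : V →ₗ[ℂ] W)) := hT
  have : FiniteDimensional ℂ (LinearMap.range (S : V →ₗ[ℂ] W)) := hS
  of_range_le (LinearMap.range_add_le (T : V →ₗ[ℂ] W) S)

lemma neg {T : V →L[ℂ] W} (hT : FiniteRank T) : FiniteRank (-T) := by
  unfold FiniteRank
  rwa [toLinearMap_neg, LinearMap.range_neg]

lemma sub {T S : V →L[ℂ] W} (hT : FiniteRank T) (hS : FiniteRank S) :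
    FiniteRank (T - S) := by
  rw [sub_eq_add_neg]
  exact hT.add hS.neg

lemma prod {T : U →L[ℂ] V} {S : U →L[ℂ] W} (hT : FiniteRank T) (hS : FiniteRank S) :
    FiniteRank (T.prod S) := by
  have : T.prod S = (inl ℂ V W).comp T + (inr ℂ V W).comp S := by ext <;> simp
  rw [this]
  exact (hT.clm_comp _).add (hS.clm_comp _)

lemma exists_idempotent_comp_eq {F : V →L[ℂ] W} (hF : FiniteRank F) :
    ∃ E : W →L[ℂ] W, FiniteRank E ∧ E.comp E = E ∧ E.comp F = F := by
  have : FiniteDimensional ℂ (LinearMap.range (F : V →ₗ[ℂ] W)) := hF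
  obtain ⟨p, hp⟩ :=
    Submodule.ClosedComplemented.of_finiteDimensional (LinearMap.range (F : V →ₗ[ℂ] W))
  refine ⟨(Submodule.subtypeL _).comp p, ?_, ?_, ?_⟩
  · exact of_range_le (by rintro _ ⟨x, rfl⟩; exact (p x).2)
  · ext x
    simp [hp]
  · ext x
    simpa using congrArg Subtype.val (hp ⟨F x, x, rfl⟩)

lemma comp_sub_comp_mem_frCommutators {F : V →L[ℂ] V} (hF : FiniteRank F)
    (G : V →L[ℂ] V) : G.comp F - F.comp G ∈ frCommutators V := by
  obtain ⟨E, hE, hEE, hEF⟩ := hF.exists_idempotent_comp_eq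
  set K := F.comp (G - G.comp E)
  have hsplit : G.comp F - F.comp G
      = ((G.comp E).comp F - F.comp (G.comp E)) + (K.comp E - E.comp K) := by
    simp only [K, ← mul_def] at hEE hEF ⊢
    have hEF' : ∀ X, E * (F * X) = F * X := fun X => by rw [← mul_assoc, hEF]
    simp only [mul_sub, sub_mul, mul_assoc, hEE, hEF, hEF']
    abel
  rw [hsplit]
  exact add_mem (AddSubgroup.subset_closure ⟨_, _, hE.clm_comp G, hF, rfl⟩)
    (AddSubgroup.subset_closure ⟨_, _, hF.comp_clm _, hE, rfl⟩)

end FiniteRank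

namespace IsParametrix

variable {Z : V →L[ℂ] W} {Q P : W →L[ℂ] V}

lemma finiteRank_lop (hQ : IsParametrix Z Q) : FiniteRank (Lop Z Q) := by
  have h : FiniteRank (ContinuousLinearMap.id ℂ V - Q.comp Z) := by simpa using hQ.1.neg
  exact (h.comp_clm _).prod (hQ.2.comp_clm _)

lemma finiteRank_sub (hQ : IsParametrix Z Q) (hP : IsParametrix Z P) : FiniteRank (Q - P) := by
  have h : Q - P = (Q.comp Z - ContinuousLinearMap.id ℂ V).comp P
      - Q.comp (Z.comp P - ContinuousLinearMap.id ℂ W) := by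
    ext v
    simp
  rw [h]
  exact (hQ.1.comp_clm P).sub (hP.2.clm_comp Q)

end IsParametrix

lemma lop_sub_lop (Z : V →L[ℂ] W) (Q P : W →L[ℂ] V) :
    let A := (inl ℂ V W).comp ((Q - P).comp (snd ℂ V W))
    let B := (inr ℂ V W).comp (Z.comp (fst ℂ V W))
    Lop Z Q - Lop Z P = B.comp A - A.comp B := by
  ext x <;> simp [Lop]

end

theorem stmt1_general {H H' : Type*}
    [NormedAddCommGroup H] [InnerProductSpace ℂ H]
    [NormedAddCommGroup H'] [InnerProductSpace ℂ H']
    (Z : H →L[ℂ] H') (Q P : H' →L[ℂ] H)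
    (hQ : IsParametrix Z Q) (hP : IsParametrix Z P) :
    FiniteRank (Lop Z Q) ∧ FiniteRank (Lop Z P) ∧
      Lop Z Q - Lop Z P ∈ frCommutators (H × H') := by
  refine ⟨hQ.finiteRank_lop, hP.finiteRank_lop, ?_⟩
  rw [lop_sub_lop]
  exact (((hQ.finiteRank_sub hP).comp_clm _).clm_comp _).comp_sub_comp_mem_frCommutators _

theorem stmt1 {H H' : Type*}
    [NormedAddCommGroup H] [InnerProductSpace ℂ H] [CompleteSpace H]
    [NormedAddCommGroup H'] [InnerProductSpace ℂ H'] [CompleteSpace H']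
    (Z : H →L[ℂ] H') (Q P : H' →L[ℂ] H)
    (hQ : IsParametrix Z Q) (hP : IsParametrix Z P) :
    FiniteRank (Lop Z Q) ∧ FiniteRank (Lop Z P) ∧
      Lop Z Q - Lop Z P ∈ frCommutators (H × H') :=
  stmt1_general Z Q P hQ hP
end

section
/- Let G be a group, R a commutative ring, det : G → Rˣ a group homomorphism, and j : Rˣ → G a group homomorphism with det ∘ j = id. If ker(det) equals the commutator subgroup G' of G, then det is the unique determinant split by j: any group homomorphism det' : G → Rˣ with det' ∘ j = id satisfies det' = det. -/
theorem stmt11 {G R : Type*} [Group G] [CommRing R]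
    (det : G →* Rˣ) (j : Rˣ →* G) (hsplit : ∀ r : Rˣ, det (j r) = r)
    (hker : MonoidHom.ker det = commutator G)
    (det' : G →* Rˣ) (hsplit' : ∀ r : Rˣ, det' (j r) = r) :
    det' = det := by
  ext g
  have hmem : g * (j (det g))⁻¹ ∈ MonoidHom.ker det := by
    simp [MonoidHom.mem_ker, hsplit]
  rw [hker] at hmem
  have h1 : det' (g * (j (det g))⁻¹) = 1 :=
    Abelianization.commutator_subset_ker det' hmem
  have := hsplit' (det g)
  simp only [map_mul, map_inv, this] at h1
  have : det' g = det g := by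
    rwa [mul_inv_eq_one] at h1
  exact congrArg Units.val this
end

section
/- Let H be a complex Hilbert space and let P and Q be orthogonal projections on H (continuous, idempotent, self-adjoint) such that P − Q is of finite rank. Then the subspaces range(P) ∩ ker(Q) and range(Q) ∩ ker(P) are finite-dimensional and Tr(P − Q) = dim(range(P) ∩ ker(Q)) − dim(range(Q) ∩ ker(P)); in particular Tr(P − Q) is an integer and equals the Fredholm index of the restriction of Q mapping range(P) to range(Q). -/
/-- The trace of a (finite-rank) continuous operator `T`, defined as the trace of the
endomorphism induced by `T` on the subspace `range T`. -/
noncomputable def fTrace {V : Type*} [NormedAddCommGroup V] [NormedSpace ℂ V]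
    (T : V →L[ℂ] V) : ℂ :=
  LinearMap.trace ℂ (LinearMap.range (T : V →ₗ[ℂ] V))
    ((T : V →ₗ[ℂ] V).restrict
      (p := LinearMap.range (T : V →ₗ[ℂ] V)) (q := LinearMap.range (T : V →ₗ[ℂ] V))
      (fun x _hx => ⟨x, rfl⟩))

/-!
Put `T = P - Q` and `A = 1 - P - Q`. Idempotency gives `A T = -T A` and `A² = 1 - T²`, so `A` is a
self-adjoint operator preserving the finite-dimensional space `range T`. That space splits
orthogonally into the kernel and the range of `A`. On the kernel `T² = 1`, so the trace of `T`
there is the difference of the dimensions of its `±1`-eigenspaces; these eigenspaces lie in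
`ker A`, and solving `A x = 0`, `T x = ±x` for `P x` and `Q x` identifies them with
`range P ∩ ker Q` and `range Q ∩ ker P`. On the range, `A` is invertible and conjugates `T` to
`-T`, so the trace of `T` there vanishes.
-/

open LinearMap Module Module.End

section Trace

variable {K V : Type*} [Field K] [AddCommGroup V] [Module K V] [FiniteDimensional K V]

theorem LinearMap.trace_eq_trace_restrict_add_trace_restrict {p q : Submodule K V}
    (hpq : IsCompl p q) {f : Module.End K V} (hp : Set.MapsTo f p p) (hq : Set.MapsTo f q q) :
    trace K V f = trace K p (f.restrict hp) + trace K q (f.restrict hq) := by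
  have hN : DirectSum.IsInternal ![p, q] :=
    (DirectSum.isInternal_submodule_iff_isCompl _ (i := 0) (j := 1) (by decide)
      (by ext i; fin_cases i <;> simp)).mpr hpq
  have hf : ∀ i, Set.MapsTo f (![p, q] i) (![p, q] i) := by
    intro i; fin_cases i
    exacts [hp, hq]
  rw [trace_eq_sum_trace_restrict hN hf, Fin.sum_univ_two]
  rfl

variable [NeZero (2 : K)]

theorem LinearMap.trace_eq_zero_of_mul_eq_neg_mul {f g : Module.End K V}
    (hg : Function.Injective g) (h : g * f = -(f * g)) : trace K V f = 0 := by
  let e := LinearEquiv.ofInjectiveEndo g hg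
  have hconj : e.conj f = -f := by
    ext x
    obtain ⟨y, rfl⟩ := e.surjective x
    simp only [LinearEquiv.conj_apply_apply, LinearEquiv.symm_apply_apply]
    exact congr($h y)
  have h2 : (2 : K) * trace K V f = 0 := by
    have := trace_conj' f e
    rw [hconj, map_neg] at this
    linear_combination -this
  simpa [two_ne_zero] using h2

theorem Module.End.trace_eq_finrank_eigenspace_sub_of_mul_self_eq_one
    {f : Module.End K V} (hf : f * f = 1) :
    trace K V f = finrank K (eigenspace f 1) - finrank K (eigenspace f (-1)) := by
  have hone : (1 : K) ≠ -1 := fun h ↦ two_ne_zero (by linear_combination h : (2 : K) = 0)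
  have hcompl : IsCompl (eigenspace f 1) (eigenspace f (-1)) := by
    refine ⟨f.eigenspaces_iSupIndep.pairwiseDisjoint hone, ?_⟩
    rw [Submodule.codisjoint_iff_exists_add_eq]
    intro x
    have hx : f (f x) = x := congr($hf x)
    refine ⟨(2⁻¹ : K) • (x + f x), (2⁻¹ : K) • (x - f x), ?_, ?_, ?_⟩
    · rw [mem_eigenspace_iff, map_smul, map_add, hx]; module
    · rw [mem_eigenspace_iff, map_smul, map_sub, hx]; module
    · rw [← smul_add, add_add_sub_cancel, ← two_smul K x, inv_smul_smul₀ two_ne_zero]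
  have hmaps : ∀ μ, Set.MapsTo f (eigenspace f μ) (eigenspace f μ) := fun μ x hx ↦ by
    rw [SetLike.mem_coe, mem_eigenspace_iff] at hx ⊢
    rw [hx, map_smul, hx]
  have hplus : f.restrict (hmaps 1) = 1 := by
    ext ⟨x, hx⟩
    exact (mem_eigenspace_iff.mp hx).trans (one_smul K x)
  have hminus : f.restrict (hmaps (-1)) = -1 := by
    ext ⟨x, hx⟩
    exact (mem_eigenspace_iff.mp hx).trans (neg_one_smul K x)
  rw [trace_eq_trace_restrict_add_trace_restrict hcompl (hmaps 1) (hmaps (-1)), hplus, hminus,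
    map_neg, trace_one, trace_one, sub_eq_add_neg]

end Trace

theorem Module.End.finrank_eigenspace_restrict {K V : Type*} [Field K] [AddCommGroup V]
    [Module K V] {f : Module.End K V} {p : Submodule K V} (hf : Set.MapsTo f p p) {μ : K}
    (hμ : eigenspace f μ ≤ p) :
    finrank K (eigenspace (f.restrict hf) μ) = finrank K (eigenspace f μ) := by
  rw [eigenspace, genEigenspace_restrict f p 1 μ hf]
  exact (Submodule.comapSubtypeEquivOfLe hμ).finrank_eq

theorem Module.End.eigenspace_neg {R M : Type*} [CommRing R] [AddCommGroup M] [Module R M]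
    (f : Module.End R M) (μ : R) : eigenspace (-f) μ = eigenspace f (-μ) := by
  ext x
  rw [mem_eigenspace_iff, mem_eigenspace_iff, LinearMap.neg_apply, neg_smul, neg_eq_iff_eq_neg,
    ← neg_smul]

theorem Module.End.eigenspace_le_range {K V : Type*} [Field K] [AddCommGroup V]
    [Module K V] (f : Module.End K V) {μ : K} (hμ : μ ≠ 0) : eigenspace f μ ≤ range f := by
  intro x hx
  refine ⟨μ⁻¹ • x, ?_⟩
  rw [map_smul, mem_eigenspace_iff.mp hx, inv_smul_smul₀ hμ]

theorem IsIdempotentElem.one_sub_sub_mul_sub {R : Type*} [Ring R] {p q : R}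
    (hp : IsIdempotentElem p) (hq : IsIdempotentElem q) :
    (1 - p - q) * (p - q) = -((p - q) * (1 - p - q)) := by
  simp only [mul_sub, sub_mul, one_mul, mul_one, hp.eq, hq.eq]
  abel

theorem IsIdempotentElem.one_sub_sub_mul_self {R : Type*} [Ring R] {p q : R}
    (hp : IsIdempotentElem p) (hq : IsIdempotentElem q) :
    (1 - p - q) * (1 - p - q) = 1 - (p - q) * (p - q) := by
  simp only [mul_sub, sub_mul, one_mul, mul_one, hp.eq, hq.eq]
  abel

namespace LinearMap.IsSymmetric

variable {𝕜 E : Type*} [RCLike 𝕜] [NormedAddCommGroup E] [InnerProductSpace 𝕜 E]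

theorem ker_mul_self {B : Module.End 𝕜 E} (hB : B.IsSymmetric) : ker (B * B) = ker B := by
  refine le_antisymm (fun x hx ↦ ?_) (ker_le_ker_comp B B)
  have : inner 𝕜 (B x) (B x) = 0 := by
    rw [hB, ← Module.End.mul_apply, mem_ker.mp hx, inner_zero_right]
  exact inner_self_eq_zero.mp this

theorem eigenspace_le_ker {S B : Module.End 𝕜 E} (hB : B.IsSymmetric) (hsq : B * B = 1 - S * S)
    {μ : 𝕜} (hμ : μ * μ = 1) : eigenspace S μ ≤ ker B := by
  intro x hx
  rw [← hB.ker_mul_self, mem_ker, hsq, sub_apply, Module.End.mul_apply, mem_eigenspace_iff.mp hx,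
    map_smul, mem_eigenspace_iff.mp hx, smul_smul, hμ, one_smul, Module.End.one_apply, sub_self]

end LinearMap.IsSymmetric

theorem LinearMap.mapsTo_range_of_mul_eq_neg_mul {R M : Type*} [Ring R] [AddCommGroup M]
    [Module R M] {f g : Module.End R M} (h : g * f = -(f * g)) :
    Set.MapsTo g (range f) (range f) := by
  rintro _ ⟨y, rfl⟩
  refine ⟨-g y, ?_⟩
  rw [map_neg, ← Module.End.mul_apply, ← Module.End.mul_apply, h, neg_apply]

section Anticommuting

variable {𝕜 E : Type*} [RCLike 𝕜] [NormedAddCommGroup E] [InnerProductSpace 𝕜 E]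

theorem LinearMap.trace_eq_finrank_eigenspace_sub_of_anticommute [FiniteDimensional 𝕜 E]
    {S B : Module.End 𝕜 E} (hB : B.IsSymmetric) (hanti : B * S = -(S * B))
    (hsq : B * B = 1 - S * S) :
    trace 𝕜 E S = finrank 𝕜 (eigenspace S 1) - finrank 𝕜 (eigenspace S (-1)) := by
  have hcompl : IsCompl (ker B) (range B) :=
    hB.orthogonal_range ▸ (range B).isCompl_orthogonal.symm
  have hker : Set.MapsTo S (ker B) (ker B) := fun x hx ↦ by
    rw [SetLike.mem_coe, mem_ker] at hx ⊢
    rw [← Module.End.mul_apply, hanti, neg_apply, Module.End.mul_apply, hx, map_zero, neg_zero]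
  have hrange : Set.MapsTo S (range B) (range B) :=
    mapsTo_range_of_mul_eq_neg_mul (by rw [hanti, neg_neg])
  have hBrange : Set.MapsTo B (range B) (range B) := fun x _ ↦ mem_range_self B x
  have htrace_range : trace 𝕜 (range B) (S.restrict hrange) = 0 := by
    refine trace_eq_zero_of_mul_eq_neg_mul (g := B.restrict hBrange) ?_ ?_
    · rw [← ker_eq_bot, eq_bot_iff]
      rintro ⟨x, hx⟩ hBx
      have hxker : x ∈ ker B := congr(Subtype.val $hBx)
      simpa using hcompl.disjoint.le_bot ⟨hxker, hx⟩
    · ext x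
      exact congr($hanti x)
  have hinvol : S.restrict hker * S.restrict hker = 1 := by
    ext ⟨x, hx⟩
    have : (B * B) x = 0 := by rw [Module.End.mul_apply, mem_ker.mp hx, map_zero]
    rw [hsq, sub_apply, sub_eq_zero] at this
    exact this.symm
  rw [trace_eq_trace_restrict_add_trace_restrict hcompl hker hrange, htrace_range, add_zero,
    trace_eq_finrank_eigenspace_sub_of_mul_self_eq_one hinvol,
    finrank_eigenspace_restrict _ (hB.eigenspace_le_ker hsq (one_mul 1)),
    finrank_eigenspace_restrict _ (hB.eigenspace_le_ker hsq (by norm_num))]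

theorem LinearMap.trace_restrict_range_eq_finrank_eigenspace_sub {T A : Module.End 𝕜 E}
    [FiniteDimensional 𝕜 (range T)] (hA : A.IsSymmetric) (hanti : A * T = -(T * A))
    (hsq : A * A = 1 - T * T) :
    trace 𝕜 (range T) (T.restrict (p := range T) (q := range T) fun x _ ↦ mem_range_self T x) =
      finrank 𝕜 (eigenspace T 1) - finrank 𝕜 (eigenspace T (-1)) := by
  have hA_range := mapsTo_range_of_mul_eq_neg_mul hanti
  have hT_range : Set.MapsTo T (range T) (range T) := fun x _ ↦ mem_range_self T x
  rw [← finrank_eigenspace_restrict hT_range (T.eigenspace_le_range one_ne_zero),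
    ← finrank_eigenspace_restrict hT_range (T.eigenspace_le_range (neg_ne_zero.mpr one_ne_zero))]
  refine trace_eq_finrank_eigenspace_sub_of_anticommute (hA.restrict_invariant hA_range) ?_ ?_
  · ext x
    exact congr($hanti x)
  · ext x
    exact congr($hsq x)

theorem LinearMap.IsSymmetricProjection.range_inf_ker_eq_eigenspace_sub
    {p q : Module.End 𝕜 E} (hp : p.IsSymmetricProjection) (hq : q.IsSymmetricProjection) :
    range p ⊓ ker q = eigenspace (p - q) 1 := by
  ext x
  simp only [Submodule.mem_inf, mem_range, mem_ker, mem_eigenspace_iff, one_smul, sub_apply]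
  constructor
  · rintro ⟨⟨y, rfl⟩, hqx⟩
    rw [hqx, sub_zero, ← Module.End.mul_apply, hp.isIdempotentElem.eq]
  · intro hx
    have hA : x ∈ ker (1 - p - q) :=
      ((IsSymmetric.one.sub hp.isSymmetric).sub hq.isSymmetric).eigenspace_le_ker
        (hp.isIdempotentElem.one_sub_sub_mul_self hq.isIdempotentElem) (one_mul 1)
        (mem_eigenspace_iff.mpr (by rw [sub_apply, hx, one_smul]))
    rw [mem_ker, sub_apply, sub_apply, Module.End.one_apply] at hA
    have h2qx : (2 : 𝕜) • q x = 0 := by linear_combination (norm := module) -hA - hx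
    have hqx : q x = 0 := (smul_eq_zero.mp h2qx).resolve_left two_ne_zero
    exact ⟨⟨x, by rwa [hqx, sub_zero] at hx⟩, hqx⟩

end Anticommuting

theorem stmt14 {H : Type*} [NormedAddCommGroup H] [InnerProductSpace ℂ H] [CompleteSpace H]
    (P Q : H →L[ℂ] H)
    (hPidem : P.comp P = P) (hQidem : Q.comp Q = Q)
    (hPsa : IsSelfAdjoint P) (hQsa : IsSelfAdjoint Q)
    (hfr : FiniteRank (P - Q)) :
    FiniteDimensional ℂ
        (LinearMap.range (P : H →ₗ[ℂ] H) ⊓ LinearMap.ker (Q : H →ₗ[ℂ] H) : Submodule ℂ H) ∧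
    FiniteDimensional ℂ
        (LinearMap.range (Q : H →ₗ[ℂ] H) ⊓ LinearMap.ker (P : H →ₗ[ℂ] H) : Submodule ℂ H) ∧
    fTrace (P - Q) =
      (Module.finrank ℂ
          (LinearMap.range (P : H →ₗ[ℂ] H) ⊓ LinearMap.ker (Q : H →ₗ[ℂ] H) : Submodule ℂ H) : ℂ) -
        (Module.finrank ℂ
          (LinearMap.range (Q : H →ₗ[ℂ] H) ⊓ LinearMap.ker (P : H →ₗ[ℂ] H) : Submodule ℂ H) : ℂ) := by
  set p : Module.End ℂ H := (P : H →ₗ[ℂ] H)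
  set q : Module.End ℂ H := (Q : H →ₗ[ℂ] H)
  have hp : p.IsSymmetricProjection :=
    ContinuousLinearMap.isStarProjection_iff_isSymmetricProjection.mp ⟨hPidem, hPsa⟩
  have hq : q.IsSymmetricProjection :=
    ContinuousLinearMap.isStarProjection_iff_isSymmetricProjection.mp ⟨hQidem, hQsa⟩
  have hE : range p ⊓ ker q = eigenspace (p - q) 1 := hp.range_inf_ker_eq_eigenspace_sub hq
  have hF : range q ⊓ ker p = eigenspace (p - q) (-1) := by
    rw [hq.range_inf_ker_eq_eigenspace_sub hp, ← neg_sub, eigenspace_neg]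
  have : FiniteDimensional ℂ (range (p - q)) := hfr
  refine ⟨hE ▸ Submodule.finiteDimensional_of_le (eigenspace_le_range _ one_ne_zero),
    hF ▸ Submodule.finiteDimensional_of_le (eigenspace_le_range _ (neg_ne_zero.mpr one_ne_zero)),
    ?_⟩
  rw [hE, hF]
  exact trace_restrict_range_eq_finrank_eigenspace_sub (A := 1 - p - q)
    ((IsSymmetric.one.sub hp.isSymmetric).sub hq.isSymmetric)
    (hp.isIdempotentElem.one_sub_sub_mul_sub hq.isIdempotentElem)
    (hp.isIdempotentElem.one_sub_sub_mul_self hq.isIdempotentElem)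
end
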